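/- arXiv:2603.14508 — 2 statements merged into one kernel-verified Lean document; each statement's English description precedes it below -/
import Mathlib

section
/- Let n be even, let p be a permutation of {1,...,n}, and let q be obtained from p by inserting n+1 into an A-gap of p. Then T1(q) = T1(p) + 1, T2(q) = T2(p), and T3(q) = T3(p). -/
open List
open scoped Classical

/-- adjacent pairs of a list -/
def pairs (l : List ℕ) : List (ℕ × ℕ) := l.zip l.tail

/-- `l` is a permutation (as a word) of `{1, ..., n}` -/
def IsPermOf (n : ℕ) (l : List ℕ) : Prop := l.Perm (List.range' 1 n)

def T1 (l : List ℕ) : ℕ := (pairs l).countP (fun q => decide (q.2 < q.1 ∧ Odd q.1 ∧ Even q.2))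
def T2 (l : List ℕ) : ℕ := (pairs l).countP (fun q => decide (q.1 < q.2 ∧ Odd q.1 ∧ Odd q.2))
def T3 (l : List ℕ) : ℕ := (pairs l).countP (fun q => decide (q.2 < q.1 ∧ Odd q.1 ∧ Odd q.2))
def S10 (l : List ℕ) : ℕ := (pairs l).countP (fun q => decide (q.2 < q.1 ∧ Odd q.1))
def S12 (l : List ℕ) : ℕ := (pairs l).countP (fun q => decide (Odd q.1 ∧ Odd q.2))

/-- largest `i` such that the values `1, ..., i` appear in left-to-right order in `l` -/
def S17 (l : List ℕ) : ℕ :=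
  Nat.findGreatest (fun i => ∀ j < i, 1 ≤ j → l.idxOf j < l.idxOf (j + 1)) l.length

def statA (l : List ℕ) : ℕ :=
  (pairs l).countP (fun q => decide (Even q.1 ∧ Even q.2)) + (if Even (l.headD 1) then 1 else 0)
def statB (l : List ℕ) : ℕ :=
  (pairs l).countP (fun q => decide (q.2 < q.1 ∧ Odd q.1)) + (if Odd (l.getLastD 0) then 1 else 0)
def statC (l : List ℕ) : ℕ :=
  (pairs l).countP (fun q => decide ((Even q.1 ∧ Odd q.2) ∨ (q.1 < q.2 ∧ Odd q.1 ∧ Odd q.2))) +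
    (if Odd (l.headD 0) then 1 else 0)
def statD (l : List ℕ) : ℕ :=
  (pairs l).countP (fun q => decide (q.1 < q.2 ∧ Odd q.1 ∧ Even q.2))
def statE (l : List ℕ) : ℕ := if Even (l.getLastD 1) then 1 else 0

/-- the `i`-th entry of `l` (0-indexed), default 0 -/
def entry (l : List ℕ) (i : ℕ) : ℕ := l.getD i 0

/-- inserting `m` at gap `j` of `l` -/
def insertGap (l : List ℕ) (j : ℕ) (m : ℕ) : List ℕ := l.take j ++ m :: l.drop j

def IsAGap (l : List ℕ) (j : ℕ) : Prop :=
  (j = 0 ∧ Even (l.headD 1)) ∨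
  (1 ≤ j ∧ j < l.length ∧ Even (entry l (j - 1)) ∧ Even (entry l j))

def IsBGap (l : List ℕ) (j : ℕ) : Prop :=
  (1 ≤ j ∧ j < l.length ∧ entry l j < entry l (j - 1) ∧ Odd (entry l (j - 1))) ∨
  (j = l.length ∧ Odd (l.getLastD 0))

def IsCGap (l : List ℕ) (j : ℕ) : Prop :=
  (j = 0 ∧ Odd (l.headD 0)) ∨
  (1 ≤ j ∧ j < l.length ∧ ((Even (entry l (j - 1)) ∧ Odd (entry l j)) ∨
    (entry l (j - 1) < entry l j ∧ Odd (entry l (j - 1)) ∧ Odd (entry l j))))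

def IsDGap (l : List ℕ) (j : ℕ) : Prop :=
  1 ≤ j ∧ j < l.length ∧ entry l (j - 1) < entry l j ∧ Odd (entry l (j - 1)) ∧ Even (entry l j)

def IsEGap (l : List ℕ) (j : ℕ) : Prop := j = l.length ∧ Even (l.getLastD 1)

/-- the word `p_1 p_2 ... p_n` (values in `{1,...,n}`) of a permutation of `Fin n` -/
def word (n : ℕ) (p : Equiv.Perm (Fin n)) : List ℕ := List.ofFn (fun i => (p i : ℕ) + 1)


/-! Inserting `m` into an A-gap between `a` and `b` (or in front of `b`) trades the pair `(a, b)`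
for `(a, m)` and `(m, b)`. Since `a` is even, the first two count for none of `T1`, `T2`, `T3`,
whose pairs all start with an odd entry. With `m = n + 1` odd and larger than the even entry `b`,
the new pair `(m, b)` is an odd-over-even descent, counted by `T1` alone. -/

lemma pairs_append_cons (t : List ℕ) (x : ℕ) (r : List ℕ) :
    pairs (t ++ x :: r) = pairs (t ++ [x]) ++ pairs (x :: r) := by
  induction t with
  | nil => rfl
  | cons c t ih =>
    cases t with
    | nil => rfl
    | cons d t => simpa [pairs] using ih

lemma entry_mem {l : List ℕ} {j : ℕ} (hj : j < l.length) : entry l j ∈ l := by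
  rw [entry, List.getD_eq_getElem _ _ hj]
  exact List.getElem_mem hj

lemma IsPermOf.entry_lt {n : ℕ} {l : List ℕ} (hl : IsPermOf n l) {j : ℕ} (hj : j < l.length) :
    entry l j < n + 1 := by
  have := hl.mem_iff.mp (entry_mem hj)
  rw [List.mem_range'_1] at this
  omega

lemma take_eq_take_pred_append_entry {l : List ℕ} {j : ℕ} (hj : 1 ≤ j) (hjl : j ≤ l.length) :
    l.take j = l.take (j - 1) ++ [entry l (j - 1)] := by
  obtain ⟨i, rfl⟩ : ∃ i, j = i + 1 := ⟨j - 1, by omega⟩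
  rw [List.take_add_one, List.getElem?_eq_getElem (by omega), entry,
    List.getD_eq_getElem _ _ (by omega)]
  rfl

lemma drop_eq_entry_cons {l : List ℕ} {j : ℕ} (hj : j < l.length) :
    l.drop j = entry l j :: l.drop (j + 1) := by
  rw [List.drop_eq_getElem_cons hj, entry, List.getD_eq_getElem _ _ hj]

namespace IsAGap

variable {l : List ℕ} {j : ℕ}

lemma lt_length (h : IsAGap l j) : j < l.length := by
  rcases h with ⟨rfl, hhead⟩ | ⟨-, hj, -⟩
  · cases l with
    | nil => simp at hhead
    | cons => simp
  · exact hj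

lemma even_entry (h : IsAGap l j) : Even (entry l j) := by
  rcases h with ⟨rfl, hhead⟩ | ⟨-, -, -, he⟩
  · cases l with
    | nil => simp at hhead
    | cons => simpa [entry] using hhead
  · exact he

lemma countP_pairs_insertGap (h : IsAGap l j) (m : ℕ) (P : ℕ × ℕ → Bool)
    (hP : ∀ x y, Even x → P (x, y) = false) :
    (pairs (insertGap l j m)).countP P = (pairs l).countP P + (P (m, entry l j)).toNat := by
  rcases h with ⟨rfl, hhead⟩ | ⟨hj, hjl, ha, -⟩
  · cases l with
    | nil => simp at hhead
    | cons b r =>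
      show ((m, b) :: pairs (b :: r)).countP P = (pairs (b :: r)).countP P + (P (m, b)).toNat
      cases hmb : P (m, b) <;> simp [hmb]
  · have ht := take_eq_take_pred_append_entry hj hjl.le
    have hd := drop_eq_entry_cons hjl
    rw [insertGap, ht, hd]
    generalize l.take (j - 1) = t, l.drop (j + 1) = r, entry l j = b at *
    generalize entry l (j - 1) = a at *
    rw [show l = t ++ [a] ++ b :: r by rw [← ht, ← hd, List.take_append_drop]]
    simp only [List.append_assoc, List.singleton_append]
    rw [pairs_append_cons t a (m :: b :: r), pairs_append_cons t a (b :: r)]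
    have hab : P (a, b) = false := hP _ _ ha
    have ham : P (a, m) = false := hP _ _ ha
    cases hmb : P (m, b) <;> simp [pairs, List.countP_append, hab, ham, hmb]
    omega

end IsAGap

theorem stmt7_general (n : ℕ) (hn : Even n) (l : List ℕ) (hl : IsPermOf n l) (j : ℕ)
    (hgap : IsAGap l j) (q : List ℕ) (hq : q = insertGap l j (n + 1)) :
    T1 q = T1 l + 1 ∧ T2 q = T2 l ∧ T3 q = T3 l := by
  subst hq
  have hm : Odd (n + 1) := hn.add_one
  have hb : Even (entry l j) := hgap.even_entry
  have hbn : entry l j < n + 1 := hl.entry_lt hgap.lt_length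
  refine ⟨?_, ?_, ?_⟩ <;> simp only [T1, T2, T3] <;>
    rw [hgap.countP_pairs_insertGap _ _ fun x y hx => by simp [Nat.not_odd_iff_even.mpr hx]] <;>
    simp [hm, hb, hbn, hbn.not_gt]

theorem stmt7 (n : ℕ) (hn : Even n) (l : List ℕ) (hl : IsPermOf n l) (j : ℕ) (hj : j ≤ n)
    (hgap : IsAGap l j) (q : List ℕ) (hq : q = insertGap l j (n + 1)) :
    T1 q = T1 l + 1 ∧ T2 q = T2 l ∧ T3 q = T3 l :=
  stmt7_general n hn l hl j hgap q hq
end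

section
/- Let n be even, let p be a permutation of {1,...,n}, and let q be obtained from p by inserting n+1 into a B-gap of p. Then T2(q) = T2(p) + 1, T1(q) = T1(p), and T3(q) = T3(p). -/
open List
open scoped Classical

/-! Inserting `n + 1` right after the entry `a` of a B-gap replaces the adjacent pair `(a, b)`
by `(a, n + 1)` and `(n + 1, b)` (only `(a, n + 1)` is new when `a` is the last entry). As `n + 1`
is odd and exceeds every entry, `(a, n + 1)` is an odd ascent, counted by `T2` alone, while
`(n + 1, b)` is, like `(a, b)`, a descent from an odd entry to `b`, so every statistic counts it
exactly when it counted `(a, b)`. -/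

lemma pairs_cons_cons (x y : ℕ) (t : List ℕ) : pairs (x :: y :: t) = (x, y) :: pairs (y :: t) :=
  rfl

lemma pairs_append_cons_s8 : ∀ (xs : List ℕ) (a : ℕ) (ys : List ℕ),
    pairs (xs ++ a :: ys) = pairs (xs ++ [a]) ++ pairs (a :: ys)
  | [], _, _ => by simp [pairs]
  | [_], _, _ => rfl
  | x :: x' :: xs, a, ys => by
    simp only [cons_append, pairs_cons_cons]
    rw [← cons_append, pairs_append_cons_s8 (x' :: xs) a ys, cons_append]

lemma countP_pairs_cons_congr (P : ℕ × ℕ → Bool) {a m : ℕ} {ys : List ℕ}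
    (h : ∀ b ∈ ys.head?, P (m, b) = P (a, b)) :
    (pairs (m :: ys)).countP P = (pairs (a :: ys)).countP P := by
  cases ys with
  | nil => rfl
  | cons b t => simp [pairs_cons_cons, countP_cons, h b rfl]

lemma countP_pairs_insert (P : ℕ × ℕ → Bool) (xs ys : List ℕ) {a m : ℕ}
    (h : ∀ b ∈ ys.head?, P (m, b) = P (a, b)) :
    (pairs (xs ++ a :: m :: ys)).countP P =
      (pairs (xs ++ a :: ys)).countP P + if P (a, m) then 1 else 0 := by
  rw [pairs_append_cons_s8 xs a (m :: ys), pairs_append_cons_s8 xs a ys, pairs_cons_cons, countP_append,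
    countP_append, countP_cons, countP_pairs_cons_congr P h]
  ring

lemma insertGap_eq_append_cons_cons (l : List ℕ) {j : ℕ} (hj : 0 < j) (hjl : j ≤ l.length)
    (m : ℕ) :
    l = l.take (j - 1) ++ l[j - 1] :: l.drop j ∧
      insertGap l j m = l.take (j - 1) ++ l[j - 1] :: m :: l.drop j := by
  obtain ⟨k, rfl⟩ : ∃ k, j = k + 1 := ⟨j - 1, by omega⟩
  have hk : k < l.length := by omega
  simp only [Nat.add_sub_cancel]
  refine ⟨?_, ?_⟩
  · conv_lhs => rw [← take_append_drop k l, drop_eq_getElem_cons hk]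
  · rw [insertGap, take_add_one, getElem?_eq_getElem hk, Option.toList_some, append_assoc,
      singleton_append]

lemma IsBGap.exists_split {l : List ℕ} {j : ℕ} (h : IsBGap l j) (m : ℕ) :
    ∃ xs a ys, l = xs ++ a :: ys ∧ insertGap l j m = xs ++ a :: m :: ys ∧ Odd a ∧
      ∀ b ∈ ys.head?, b < a := by
  have hj : 0 < j ∧ j ≤ l.length := by
    rcases h with ⟨hj, hjl, -⟩ | ⟨rfl, hlast⟩
    · omega
    · cases l with
      | nil => simp at hlast
      | cons => simp
  obtain ⟨hl, hins⟩ := insertGap_eq_append_cons_cons l hj.1 hj.2 m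
  refine ⟨_, _, _, hl, hins, ?_⟩
  rcases h with ⟨hj1, hjl, hlt, hodd⟩ | ⟨rfl, hlast⟩
  · have ha : entry l (j - 1) = l[j - 1] := by
      simp [entry, getElem?_eq_getElem (by omega : j - 1 < l.length)]
    have hb : (l.drop j).head? = some (entry l j) := by simp [entry, getElem?_eq_getElem hjl]
    rw [← ha, hb]
    exact ⟨hodd, by simpa using hlt⟩
  · have hne : l ≠ [] := by rintro rfl; simp at hlast
    rw [getLastD_eq_getLast?, getLast?_eq_some_getLast hne, Option.getD_some,
      getLast_eq_getElem] at hlast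
    simpa using hlast

lemma IsPermOf.le_of_mem {n : ℕ} {l : List ℕ} (hl : IsPermOf n l) {x : ℕ} (hx : x ∈ l) :
    x ≤ n := by
  have := hl.mem_iff.mp hx
  simp only [mem_range'_1] at this
  omega

theorem stmt8_general (n : ℕ) (hn : Even n) (l : List ℕ) (hl : IsPermOf n l) (j : ℕ)
    (hgap : IsBGap l j) (q : List ℕ) (hq : q = insertGap l j (n + 1)) :
    T2 q = T2 l + 1 ∧ T1 q = T1 l ∧ T3 q = T3 l := by
  obtain ⟨xs, a, ys, rfl, hins, ha, hdesc⟩ := hgap.exists_split (n + 1)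
  rw [hq, hins]
  have hm : Odd (n + 1) := hn.add_one
  have ham : a < n + 1 := Nat.lt_succ_of_le (hl.le_of_mem (by simp))
  have hb : ∀ b ∈ ys.head?, b < a ∧ b < n + 1 := fun b hb =>
    ⟨hdesc b hb, (hdesc b hb).trans ham⟩
  refine ⟨?_, ?_, ?_⟩ <;> simp only [T1, T2, T3] <;>
    rw [countP_pairs_insert _ _ _ fun b hb' => by
      obtain ⟨hba, hbm⟩ := hb b hb'
      simp [ha, hm, hba, hbm, Nat.not_lt_of_gt hba, Nat.not_lt_of_gt hbm]] <;>
    simp [ha, hm, ham, Nat.not_lt_of_gt ham]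

theorem stmt8 (n : ℕ) (hn : Even n) (l : List ℕ) (hl : IsPermOf n l) (j : ℕ) (hj : j ≤ n)
    (hgap : IsBGap l j) (q : List ℕ) (hq : q = insertGap l j (n + 1)) :
    T2 q = T2 l + 1 ∧ T1 q = T1 l ∧ T3 q = T3 l :=
  stmt8_general n hn l hl j hgap q hq
end
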